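/- arXiv:1305.4079 — 4 statements merged into one kernel-verified Lean document; each statement's English description precedes it below -/
import Mathlib

section
/- (Openness of strict separation.) Let E ⊂ ℝⁿ × ℝ be a bounded parabolic neighborhood (E = U ∩ {t ≤ τ₀} with U open), and let u be upper semi-continuous and v lower semi-continuous on the closure of E, both nonnegative. Define Θ := {τ : u < v on cl(Ω(u;E)) ∩ cl(E) ∩ {t ≤ τ}}, where Ω(u;E) = {(x,t) ∈ E : u(x,t) > 0}. Then Θ is open in ℝ, and Θ = (-∞, T) for some T ∈ (-∞, +∞]. -/
/-! The points of `K = cl(Ω(u;E)) ∩ cl E` where strict separation fails form the set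
`{v ≤ u}`, which is closed by semicontinuity and hence compact. Strict separation up to time `τ`
says exactly that `τ` lies below every time coordinate of that set, so `Θ` is all of `ℝ` when the
set is empty and is `(-∞, T)` otherwise, `T` being the least time in the set, attained by
compactness. -/

open Set Filter Topology

section Semicontinuity

variable {X γ : Type*} [TopologicalSpace X] [LinearOrder γ] {s : Set X} {u v : X → γ}

theorem UpperSemicontinuousWithinAt.eventually_lt [DenselyOrdered γ] {x : X}
    (hu : UpperSemicontinuousWithinAt u s x) (hv : LowerSemicontinuousWithinAt v s x)
    (h : u x < v x) : ∀ᶠ y in 𝓝[s] x, u y < v y := by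
  obtain ⟨c, huc, hcv⟩ := exists_between h
  filter_upwards [hu c huc, hv c hcv] with y hyu hyv using hyu.trans hyv

theorem UpperSemicontinuousOn.isClosed_sep_le [DenselyOrdered γ] (hu : UpperSemicontinuousOn u s)
    (hv : LowerSemicontinuousOn v s) (hs : IsClosed s) : IsClosed {x ∈ s | v x ≤ u x} := by
  refine isClosed_of_closure_subset fun x hx ↦ ?_
  have hxs : x ∈ s := hs.closure_subset_iff.2 (sep_subset _ _) hx
  refine ⟨hxs, not_lt.1 fun hlt ↦ ?_⟩
  have : (𝓝[{x ∈ s | v x ≤ u x}] x).NeBot := mem_closure_iff_nhdsWithin_neBot.1 hx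
  have hlt_near : ∀ᶠ y in 𝓝[{x ∈ s | v x ≤ u x}] x, u y < v y :=
    (UpperSemicontinuousWithinAt.eventually_lt (hu x hxs) (hv x hxs) hlt).filter_mono
      (nhdsWithin_mono x (sep_subset _ _))
  obtain ⟨y, hy_lt, hy⟩ := (hlt_near.and eventually_mem_nhdsWithin).exists
  exact hy_lt.not_ge hy.2

end Semicontinuity

theorem IsCompact.setOf_forall_lt_eq_univ_or_Iio {X α : Type*} [TopologicalSpace X]
    [LinearOrder α] [TopologicalSpace α] [ClosedIicTopology α] {A : Set X} {f : X → α}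
    (hA : IsCompact A) (hf : ContinuousOn f A) :
    {τ | ∀ x ∈ A, τ < f x} = univ ∨ ∃ T, {τ | ∀ x ∈ A, τ < f x} = Iio T := by
  rcases A.eq_empty_or_nonempty with rfl | hne
  · simp
  · obtain ⟨x₀, hx₀, hmin⟩ := hA.exists_isMinOn hne hf
    exact .inr ⟨f x₀, Subset.antisymm (fun τ hτ ↦ hτ x₀ hx₀)
      fun τ hτ x hx ↦ lt_of_lt_of_le hτ (hmin hx)⟩

theorem setOf_forall_le_imp_lt_eq {X α γ : Type*} [LinearOrder α] [LinearOrder γ]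
    (K : Set X) (f : X → α) (u v : X → γ) :
    {τ | ∀ x ∈ K, f x ≤ τ → u x < v x} =
      {τ | ∀ x ∈ {x ∈ K | v x ≤ u x}, τ < f x} := by
  ext τ
  simp only [mem_ofPred_eq, and_imp]
  exact forall₂_congr fun x _ ↦ by rw [← not_imp_not, not_lt, not_le]

theorem IsCompact.strictSeparation_eq_univ_or_Iio {X α γ : Type*} [TopologicalSpace X]
    [T2Space X] [LinearOrder α] [TopologicalSpace α] [ClosedIicTopology α] [LinearOrder γ]
    [DenselyOrdered γ] {K : Set X} {f : X → α} {u v : X → γ} (hK : IsCompact K)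
    (hu : UpperSemicontinuousOn u K) (hv : LowerSemicontinuousOn v K) (hf : ContinuousOn f K) :
    {τ | ∀ x ∈ K, f x ≤ τ → u x < v x} = univ ∨
      ∃ T, {τ | ∀ x ∈ K, f x ≤ τ → u x < v x} = Iio T := by
  rw [setOf_forall_le_imp_lt_eq]
  exact (hK.of_isClosed_subset (hu.isClosed_sep_le hv hK.isClosed) (sep_subset _ _)
    ).setOf_forall_lt_eq_univ_or_Iio (hf.mono (sep_subset _ _))

theorem stmt6_general {n : ℕ}
    (E : Set (EuclideanSpace ℝ (Fin n) × ℝ))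
    (hbdd : Bornology.IsBounded E)
    (u v : EuclideanSpace ℝ (Fin n) × ℝ → ℝ)
    (hu : UpperSemicontinuousOn u (closure E))
    (hv : LowerSemicontinuousOn v (closure E)) :
    let Θ : Set ℝ :=
      {τ | ∀ p ∈ closure {p ∈ E | 0 < u p} ∩ closure E, p.2 ≤ τ → u p < v p}
    IsOpen Θ ∧ (Θ = Set.univ ∨ ∃ T : ℝ, Θ = Set.Iio T) := by
  have hK : IsCompact (closure {p ∈ E | 0 < u p} ∩ closure E) :=
    hbdd.isCompact_closure.inter_left isClosed_closure
  rcases hK.strictSeparation_eq_univ_or_Iio (hu.mono inter_subset_right)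
    (hv.mono inter_subset_right) continuous_snd.continuousOn with h | ⟨T, h⟩
  · exact ⟨h ▸ isOpen_univ, .inl h⟩
  · exact ⟨h ▸ isOpen_Iio, .inr ⟨T, h⟩⟩

/-- Openness of strict separation: for a bounded parabolic neighborhood
`E = U ∩ {t ≤ τ₀}`, `u` USC and `v` LSC on `cl E`, both nonnegative, the set
`Θ = {τ : u < v on cl(Ω(u;E)) ∩ cl E ∩ {t ≤ τ}}` is open and is of the form
`(-∞, T)` with `T ∈ (-∞, +∞]` (i.e. `Θ = ℝ` or `Θ = Iio T` for some real `T`). -/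
theorem stmt6 {n : ℕ} (hn : 1 ≤ n)
    (U : Set (EuclideanSpace ℝ (Fin n) × ℝ)) (τ₀ : ℝ) (hU : IsOpen U)
    (E : Set (EuclideanSpace ℝ (Fin n) × ℝ))
    (hE : E = U ∩ {p | p.2 ≤ τ₀}) (hEne : E.Nonempty)
    (hbdd : Bornology.IsBounded E)
    (u v : EuclideanSpace ℝ (Fin n) × ℝ → ℝ)
    (hu : UpperSemicontinuousOn u (closure E))
    (hv : LowerSemicontinuousOn v (closure E))
    (hu0 : ∀ p, 0 ≤ u p) (hv0 : ∀ p, 0 ≤ v p) :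
    let Θ : Set ℝ :=
      {τ | ∀ p ∈ closure {p ∈ E | 0 < u p} ∩ closure E, p.2 ≤ τ → u p < v p}
    IsOpen Θ ∧ (Θ = Set.univ ∨ ∃ T : ℝ, Θ = Set.Iio T) :=
  stmt6_general E hbdd u v hu hv
end

section
/- (Radial perturbation function.) Let n ≥ 3. There exist R > 0 and a smooth, radially symmetric function ρ : cl B_{2R}(0) \ B_R(0) → [1,6] such that ρΔρ ≥ (n-1)|Dρ|² on B_{2R}(0) \ cl B_R(0), ρ = 1 on ∂B_{2R}(0), and ρ > 5 on cl B_{R+1}(0) \ B_R(0). -/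
open Real Metric

/-- The Laplacian of `f : ℝⁿ → ℝ` at `x`, as the sum of second partial derivatives
along the standard basis. -/
noncomputable def lap {n : ℕ} (f : EuclideanSpace ℝ (Fin n) → ℝ)
    (x : EuclideanSpace ℝ (Fin n)) : ℝ :=
  ∑ i : Fin n,
    fderiv ℝ (fun y => fderiv ℝ f y (EuclideanSpace.single i 1)) x
      (EuclideanSpace.single i 1)

section aux
variable (a c m : ℝ)

noncomputable def ufun (s : ℝ) : ℝ := a - c * s ^ (-(m/2))
noncomputable def ufun' (s : ℝ) : ℝ := c * (m/2) * s ^ (-(m/2) - 1)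
noncomputable def ufun'' (s : ℝ) : ℝ := c * (m/2) * (-(m/2) - 1) * s ^ (-(m/2) - 2)
noncomputable def gfun (s : ℝ) : ℝ := ufun a c m s ^ (-(1/m))
noncomputable def gfun' (s : ℝ) : ℝ :=
  -(1/m) * ufun a c m s ^ (-(1/m) - 1) * ufun' c m s
noncomputable def gfun'' (s : ℝ) : ℝ :=
  -(1/m) * ((-(1/m) - 1) * ufun a c m s ^ (-(1/m) - 2) * ufun' c m s * ufun' c m s
    + ufun a c m s ^ (-(1/m) - 1) * ufun'' c m s)

variable {a c m}

lemma hasDerivAt_ufun {s : ℝ} (hs : s ≠ 0) :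
    HasDerivAt (ufun a c m) (ufun' c m s) s := by
  have h : HasDerivAt (fun t : ℝ => t ^ (-(m/2))) (-(m/2) * s ^ (-(m/2) - 1)) s :=
    Real.hasDerivAt_rpow_const (Or.inl hs)
  have := ((h.const_mul c).const_sub a)
  refine this.congr_deriv ?_
  unfold ufun' ; ring

lemma hasDerivAt_ufun' {s : ℝ} (hs : s ≠ 0) :
    HasDerivAt (ufun' c m) (ufun'' c m s) s := by
  have h : HasDerivAt (fun t : ℝ => t ^ (-(m/2) - 1)) ((-(m/2) - 1) * s ^ (-(m/2) - 1 - 1)) s :=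
    Real.hasDerivAt_rpow_const (Or.inl hs)
  have := h.const_mul (c * (m/2))
  refine this.congr_deriv ?_
  try (unfold ufun'' ; ring)

lemma hasDerivAt_gfun {s : ℝ} (hs : s ≠ 0) (hu : ufun a c m s ≠ 0) :
    HasDerivAt (gfun a c m) (gfun' a c m s) s := by
  have h : HasDerivAt (fun t : ℝ => t ^ (-(1/m))) (-(1/m) * ufun a c m s ^ (-(1/m) - 1))
      (ufun a c m s) := Real.hasDerivAt_rpow_const (Or.inl hu)
  exact h.comp s (hasDerivAt_ufun hs)

lemma hasDerivAt_gfun' {s : ℝ} (hs : s ≠ 0) (hu : ufun a c m s ≠ 0) :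
    HasDerivAt (gfun' a c m) (gfun'' a c m s) s := by
  have h1 : HasDerivAt (fun t : ℝ => t ^ (-(1/m) - 1))
      ((-(1/m) - 1) * ufun a c m s ^ (-(1/m) - 1 - 1)) (ufun a c m s) :=
    Real.hasDerivAt_rpow_const (Or.inl hu)
  have h2 : HasDerivAt (fun t => ufun a c m t ^ (-(1/m) - 1))
      ((-(1/m) - 1) * ufun a c m s ^ (-(1/m) - 1 - 1) * ufun' c m s) s :=
    h1.comp s (hasDerivAt_ufun hs)
  have h4 : HasDerivAt (ufun' c m) (ufun'' c m s) s := hasDerivAt_ufun' hs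
  have h3 := (h2.const_mul (-(1/m))).mul h4
  refine h3.congr_deriv ?_
  unfold gfun'' ; ring

lemma ukey {n : ℕ} {s : ℝ} (hs : 0 < s) (hn : (m : ℝ) = n - 2) :
    4 * s * ufun'' c m s + 2 * n * ufun' c m s = 0 := by
  have h1 : s ^ (-(m/2) - 1) = s ^ (-(m/2) - 2) * s := by
    rw [← Real.rpow_add_one hs.ne' (-(m/2) - 2)]; ring_nf
  unfold ufun' ufun''
  linear_combination (2*(n:ℝ)*(c*(m/2))) * h1 + (-2*(c*(m/2))*s*s ^ (-(m/2) - 2)) * hn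

lemma main_identity {n : ℕ} {s : ℝ} (hs : 0 < s) (hm : 1 ≤ m) (hn : (m : ℝ) = n - 2)
    (hu : 0 < ufun a c m s) :
    gfun a c m s * (4 * s * gfun'' a c m s + 2 * n * gfun' a c m s)
      = (n - 1 : ℝ) * (4 * s * (gfun' a c m s) ^ 2) := by
  have hm0 : m ≠ 0 := by linarith
  set X := ufun a c m s with hX
  set U1 := ufun' c m s with hU1
  set U2 := ufun'' c m s with hU2
  have hrel : X ^ (-(1/m)) * X ^ (-(1/m) - 2) = (X ^ (-(1/m) - 1)) ^ 2 := by
    rw [sq, ← Real.rpow_add hu, ← Real.rpow_add hu]; ring_nf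
  have hk : (n - 1 : ℝ) * (1/m) ^ 2 = (1/m) * (1/m + 1) := by
    field_simp; nlinarith [hn]
  have h0 : 4 * s * U2 + 2 * n * U1 = 0 := ukey hs hn
  have hinv : m * m⁻¹ = 1 := mul_inv_cancel₀ hm0
  unfold gfun gfun' gfun''
  rw [← hX, ← hU1, ← hU2]
  linear_combination (-(1/m) * X ^ (-(1/m)) * X ^ (-(1/m) - 1)) * h0 +
    (-(1/m) * (-(1/m) - 1) * 4 * s * U1 ^ 2) * hrel + (4 * s * U1 ^ 2 * (X ^ (-(1/m) - 1))^2) * hk +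
    (8*s*U1^2*(X ^ (-(1/m) - 1))^2*(1/m)^2) * hn +
    (-8*s*U1^2*(X ^ (-(1/m) - 1))^2*(1/m)) * hinv

lemma rpow_bridge {m : ℝ} {mN : ℕ} (hm : m = mN) {r : ℝ} (hr : 0 < r) :
    ((r^2 : ℝ)) ^ (-(m/2)) = ((r ^ mN)⁻¹ : ℝ) := by
  rw [← Real.rpow_natCast r 2, ← Real.rpow_mul hr.le]
  rw [show ((2:ℕ):ℝ) * (-(m/2)) = -(mN:ℝ) by rw [hm]; push_cast; ring]
  rw [Real.rpow_neg hr.le, Real.rpow_natCast]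

lemma rpow_inv_pow_base {m : ℝ} {mN : ℕ} (hm : m = mN) (hm0 : m ≠ 0) {b : ℝ} (hb : 0 < b) :
    (((b ^ mN)⁻¹ : ℝ)) ^ (-(1/m)) = b := by
  rw [← Real.rpow_natCast b mN, ← hm, ← Real.rpow_neg hb.le, ← Real.rpow_mul hb.le]
  rw [show (-m) * (-(1/m)) = 1 by field_simp]
  exact Real.rpow_one b
end aux
lemma numeric_core (mN : ℕ) (hm1 : 1 ≤ mN) :
    ∀ R : ℝ, R = 13 * mN * 5 ^ mN →
    (1 - ((6:ℝ)^mN)⁻¹) / ((R ^ mN)⁻¹ - ((2*R) ^ mN)⁻¹) * (((R+1) ^ mN)⁻¹ - ((2*R) ^ mN)⁻¹)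
      > 1 - ((5:ℝ)^mN)⁻¹ := by
  intro R hR
  have hm : (1:ℝ) ≤ mN := by exact_mod_cast hm1
  have h5 : (5:ℝ) ≤ 5 ^ mN := by
    calc (5:ℝ) = 5^1 := (pow_one 5).symm
    _ ≤ 5 ^ mN := pow_le_pow_right₀ (by norm_num) hm1
  have hR0 : 0 < R := by rw [hR]; positivity
  have hR1 : 1 < R := by nlinarith
  set P := ((R:ℝ) ^ mN)⁻¹ with hPdef
  set Q := (((2*R):ℝ) ^ mN)⁻¹ with hQdef
  set T := (((R+1):ℝ) ^ mN)⁻¹ with hTdef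
  set s5 := ((5:ℝ)^mN)⁻¹ with h5def
  set s6 := ((6:ℝ)^mN)⁻¹ with h6def
  have hP : 0 < P := by positivity
  have hQ : 0 < Q := by positivity
  have hT : 0 < T := by positivity
  have hs5 : 0 < s5 := by positivity
  have hs6 : 0 < s6 := by positivity
  have hs5le : s5 ≤ 5⁻¹ := by
    rw [h5def]
    exact inv_anti₀ (by norm_num) h5
  have hQP : Q < P := by
    apply inv_strictAnti₀ (by positivity)
    exact pow_lt_pow_left₀ (by linarith) (by linarith) (by omega)
  have hQhalf : Q ≤ P / 2 := by
    have h2m : (2:ℝ) ≤ 2 ^ mN := by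
      calc (2:ℝ) = 2^1 := (pow_one 2).symm
      _ ≤ 2 ^ mN := pow_le_pow_right₀ (by norm_num) hm1
    have : Q = (2 ^ mN)⁻¹ * P := by
      rw [hQdef, hPdef, mul_pow, mul_inv]
    rw [this]
    rw [div_eq_mul_inv, mul_comm]
    apply mul_le_mul_of_nonneg_left _ hP.le
    exact inv_anti₀ (by norm_num) h2m
  set ε := s5 / 13 with hεdef
  have hεR : (mN : ℝ) / R = ε := by
    rw [hR, hεdef, h5def]
    have : (5:ℝ)^mN ≠ 0 := by positivity
    field_simp
  have hTP : P * (1 - ε) < T := by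
    -- Bernoulli
    have hxr : (0:ℝ) < 1/(R+1) := by positivity
    have hxr1 : 1/(R+1) ≤ 1 := by
      rw [div_le_one (by linarith)]; linarith
    have hb : (1 + (-(1/(R+1))))^mN ≥ 1 + (mN:ℝ) * (-(1/(R+1))) :=
      one_add_mul_le_pow (by linarith) mN
    have hfrac : (1 + (-(1/(R+1)))) = R / (R+1) := by field_simp; ring
    have hpow : (R/(R+1))^mN = R^mN * T := by
      rw [hTdef, div_pow, div_eq_mul_inv]
    have h1 : R^mN * T ≥ 1 - (mN:ℝ)/(R+1) := by
      rw [← hpow, ← hfrac]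
      calc (1 + (-(1/(R+1))))^mN ≥ 1 + (mN:ℝ) * (-(1/(R+1))) := hb
      _ = 1 - (mN:ℝ)/(R+1) := by ring
    have h2 : (mN:ℝ)/(R+1) < (mN:ℝ)/R := by
      apply div_lt_div_of_pos_left (by positivity) hR0 (by linarith)
    have h3 : R^mN * T > 1 - ε := by rw [← hεR]; linarith
    have hRm : (0:ℝ) < R ^ mN := by positivity
    have : P * (R^mN * T) = T := by
      rw [hPdef]; field_simp
    nlinarith [mul_lt_mul_of_pos_left h3 hP]
  have h56 : s5/ 6 ≤ s5 - s6 := by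
    -- 6 * 5^mN ≤ 5 * 6^mN
    obtain ⟨k, rfl⟩ : ∃ k, mN = k + 1 := ⟨mN - 1, by omega⟩
    have hk : (5:ℝ)^k ≤ 6^k := pow_le_pow_left₀ (by norm_num) (by norm_num) k
    have h65 : 6 * (5:ℝ)^(k+1) ≤ 5 * 6^(k+1) := by
      rw [pow_succ, pow_succ]; nlinarith
    have h5p : (0:ℝ) < 5^(k+1) := by positivity
    have h6p : (0:ℝ) < 6^(k+1) := by positivity
    have h56' : (1:ℝ)/6^(k+1) ≤ 5/(6*5^(k+1)) := by
      rw [div_le_div_iff₀ h6p (by positivity)]; nlinarith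
    have e1 : s6 ≤ 5/6 * s5 := by
      rw [h6def, inv_eq_one_div]
      calc (1:ℝ)/6^(k+1) ≤ 5/(6*5^(k+1)) := h56'
      _ = 5/6 * s5 := by rw [h5def, inv_eq_one_div]; ring
    linarith
  -- main estimate
  have hs61 : s6 < 1 := by
    rw [h6def]
    apply inv_lt_one_of_one_lt₀
    calc (1:ℝ) < 6^1 := by norm_num
    _ ≤ 6^mN := pow_le_pow_right₀ (by norm_num) hm1
  clear_value P Q T s5 s6 ε
  have hkey : (1 - s6) * (T - Q) > (1 - s5) * (P - Q) := by
    have e1 : (1 - s6) * (T - Q) > (1 - s6) * (P * (1-ε) - Q) := by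
      apply mul_lt_mul_of_pos_left _ (by linarith)
      linarith
    have e2 : (1 - s6) * (P * (1-ε) - Q) ≥ (1 - s5) * (P - Q) := by
      have hs56 : 0 < s5 - s6 := by linarith
      have hPQ2 : P/2 ≤ P - Q := by linarith
      have f1 : s5/6 * (P/2) ≤ (s5 - s6)*(P - Q) :=
        mul_le_mul h56 hPQ2 (by positivity) (by linarith)
      have f2 : (1 - s6)*(P*ε) ≤ P * (s5/13) := by
        have : (1 - s6)*(P*ε) ≤ 1 * (P*ε) :=
          mul_le_mul_of_nonneg_right (by linarith)
            (mul_nonneg hP.le (hεdef ▸ div_nonneg hs5.le (by norm_num)))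
        rw [hεdef] at this ⊢
        linarith
      linarith [f1, f2, mul_pos hP hs5]
    linarith
  have hPQ : 0 < P - Q := by linarith
  rw [gt_iff_lt, div_mul_eq_mul_div, lt_div_iff₀ hPQ]
  linarith [hkey]

/-- Radial perturbation function: for `n ≥ 3` there exist `R > 0` and a
smooth, radially symmetric function `ρ : cl B_{2R} \ B_R → [1,6]` such that
`ρΔρ ≥ (n-1)|Dρ|²` on `B_{2R} \ cl B_R`, `ρ = 1` on `∂B_{2R}`, and `ρ > 5` on
`cl B_{R+1} \ B_R`. -/
theorem stmt14 (n : ℕ) (hn : 3 ≤ n) :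
    ∃ R : ℝ, 0 < R ∧
      ∃ ρ : EuclideanSpace ℝ (Fin n) → ℝ,
        ContDiffOn ℝ (⊤ : ℕ∞) ρ (closedBall (0 : EuclideanSpace ℝ (Fin n)) (2 * R) \
          ball 0 R) ∧
        (∀ x ∈ closedBall (0 : EuclideanSpace ℝ (Fin n)) (2 * R) \ ball 0 R,
          ρ x ∈ Set.Icc (1 : ℝ) 6) ∧
        (∀ x y : EuclideanSpace ℝ (Fin n),
          x ∈ closedBall (0 : EuclideanSpace ℝ (Fin n)) (2 * R) \ ball 0 R →
          y ∈ closedBall (0 : EuclideanSpace ℝ (Fin n)) (2 * R) \ ball 0 R →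
          ‖x‖ = ‖y‖ → ρ x = ρ y) ∧
        (∀ x : EuclideanSpace ℝ (Fin n), R < ‖x‖ → ‖x‖ < 2 * R →
          (n - 1 : ℝ) * ‖gradient ρ x‖ ^ 2 ≤ ρ x * lap ρ x) ∧
        (∀ x : EuclideanSpace ℝ (Fin n), ‖x‖ = 2 * R → ρ x = 1) ∧
        (∀ x : EuclideanSpace ℝ (Fin n), R ≤ ‖x‖ → ‖x‖ ≤ R + 1 → 5 < ρ x) := by
  classical
  set mN : ℕ := n - 2 with hmNdef
  have hm1 : 1 ≤ mN := by omega
  set m : ℝ := (mN : ℝ) with hmdef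
  have hm : (1:ℝ) ≤ m := by rw [hmdef]; exact_mod_cast hm1
  have hm0 : m ≠ 0 := by linarith
  have hmn : (m : ℝ) = n - 2 := by
    rw [hmdef, hmNdef]
    push_cast [Nat.cast_sub (show 2 ≤ n by omega)]
    ring
  set R : ℝ := 13 * mN * 5 ^ mN with hRdef
  have h5m : (5:ℝ) ≤ 5 ^ mN := by
    calc (5:ℝ) = 5^1 := (pow_one 5).symm
    _ ≤ 5 ^ mN := pow_le_pow_right₀ (by norm_num) hm1
  have hR0 : 0 < R := by rw [hRdef]; positivity
  have hR1 : 1 < R := by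
    have : (1:ℝ) ≤ mN := hm
    nlinarith
  set s5 : ℝ := ((5:ℝ)^mN)⁻¹ with h5def
  set s6 : ℝ := ((6:ℝ)^mN)⁻¹ with h6def
  set P : ℝ := ((R:ℝ) ^ mN)⁻¹ with hPdef
  set Q : ℝ := (((2*R):ℝ) ^ mN)⁻¹ with hQdef
  set T : ℝ := (((R+1):ℝ) ^ mN)⁻¹ with hTdef
  set c : ℝ := (1 - s6) / (P - Q) with hcdef
  set a : ℝ := 1 + c * Q with hadef
  have hs5 : 0 < s5 := by rw [h5def]; positivity
  have hs6 : 0 < s6 := by rw [h6def]; positivity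
  have hs61 : s6 < 1 := by
    rw [h6def]
    apply inv_lt_one_of_one_lt₀
    calc (1:ℝ) < 6^1 := by norm_num
    _ ≤ 6^mN := pow_le_pow_right₀ (by norm_num) hm1
  have hQP : Q < P := by
    rw [hQdef, hPdef]
    apply inv_strictAnti₀ (by positivity)
    exact pow_lt_pow_left₀ (by linarith) (by linarith) (by omega)
  have hc : 0 < c := by
    rw [hcdef]
    apply div_pos (by linarith) (by linarith)
  have hcore : c * (T - Q) > 1 - s5 := by
    have := numeric_core mN hm1 R hRdef
    rw [← hPdef, ← hQdef, ← hTdef, ← h5def, ← h6def, ← hcdef] at this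
    exact this
  -- value function
  have hval : ∀ r : ℝ, 0 < r → ufun a c m (r^2) = a - c * ((r ^ mN)⁻¹ : ℝ) := by
    intro r hr
    unfold ufun
    rw [rpow_bridge hmdef hr]
  have hmono : ∀ r1 r2 : ℝ, 0 < r1 → r1 ≤ r2 →
      a - c * ((r1 ^ mN)⁻¹ : ℝ) ≤ a - c * ((r2 ^ mN)⁻¹ : ℝ) := by
    intro r1 r2 h1 h12
    have : (r2 ^ mN)⁻¹ ≤ (r1 ^ mN)⁻¹ :=
      inv_anti₀ (by positivity) (pow_le_pow_left₀ h1.le h12 mN)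
    nlinarith
  have hcPQ : c * (P - Q) = 1 - s6 := by
    rw [hcdef]; exact div_mul_cancel₀ _ (ne_of_gt (sub_pos.2 hQP))
  have hv6 : a - c * P = s6 := by
    rw [hadef]; linear_combination -hcPQ
  have hv1 : a - c * Q = 1 := by rw [hadef]; ring
  have hvT : a - c * T < s5 := by
    have : a - c * T = 1 - c * (T - Q) := by rw [hadef]; ring
    rw [this]; linarith
  have hx0pos : ∀ x : EuclideanSpace ℝ (Fin n), R ≤ ‖x‖ → 0 < ‖x‖ :=
    fun x hx => lt_of_lt_of_le (by linarith) hx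
  have hu_bounds : ∀ x : EuclideanSpace ℝ (Fin n), R ≤ ‖x‖ → ‖x‖ ≤ 2*R →
      s6 ≤ ufun a c m (‖x‖^2) ∧ ufun a c m (‖x‖^2) ≤ 1 := by
    intro x h1 h2
    have hx0 : 0 < ‖x‖ := hx0pos x h1
    rw [hval _ hx0]
    constructor
    · rw [← hv6, hPdef]
      exact hmono R ‖x‖ hR0 h1
    · rw [← hv1, hQdef]
      exact hmono ‖x‖ (2*R) hx0 h2
  have hmem : ∀ x : EuclideanSpace ℝ (Fin n),
      x ∈ closedBall (0 : EuclideanSpace ℝ (Fin n)) (2*R) \ ball 0 R →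
      R ≤ ‖x‖ ∧ ‖x‖ ≤ 2*R := by
    intro x hx
    obtain ⟨h1, h2⟩ := hx
    rw [Metric.mem_closedBall, dist_zero_right] at h1
    rw [Metric.mem_ball, dist_zero_right] at h2
    exact ⟨not_lt.mp h2, h1⟩
  have hz_neg : -(1/m) < 0 := by
    have : 0 < 1/m := by positivity
    linarith
  clear_value mN m R s5 s6 P Q T c a
  refine ⟨R, hR0, fun x => gfun a c m (‖x‖^2), ?_, ?_, ?_, ?_, ?_, ?_⟩
  · -- smoothness
    intro x hx
    obtain ⟨h1, h2⟩ := hmem x hx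
    have hx0 : 0 < ‖x‖ := hx0pos x h1
    have hs : (0:ℝ) < ‖x‖^2 := by positivity
    have hu0 : 0 < ufun a c m (‖x‖^2) := lt_of_lt_of_le hs6 (hu_bounds x h1 h2).1
    apply ContDiffAt.contDiffWithinAt
    have h3 : ContDiffAt ℝ (⊤ : ℕ∞) (fun y : EuclideanSpace ℝ (Fin n) => ‖y‖^2) x :=
      (contDiff_norm_sq ℝ).contDiffAt
    have h2' : ContDiffAt ℝ (⊤ : ℕ∞) (ufun a c m) (‖x‖^2) := by
      unfold ufun
      exact contDiffAt_const.sub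
        (contDiffAt_const.mul (Real.contDiffAt_rpow_const_of_ne hs.ne'))
    have h1' : ContDiffAt ℝ (⊤ : ℕ∞) (fun t : ℝ => t ^ (-(1/m))) (ufun a c m (‖x‖^2)) :=
      Real.contDiffAt_rpow_const_of_ne hu0.ne'
    exact (h1'.comp _ h2').comp x h3
  · -- range in [1,6]
    intro x hx
    obtain ⟨h1, h2⟩ := hmem x hx
    have hu0 : 0 < ufun a c m (‖x‖^2) := lt_of_lt_of_le hs6 (hu_bounds x h1 h2).1
    constructor
    · have := Real.rpow_le_rpow_of_nonpos hu0 (hu_bounds x h1 h2).2 hz_neg.le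
      rw [Real.one_rpow] at this
      exact this
    · have := Real.rpow_le_rpow_of_nonpos hs6 (hu_bounds x h1 h2).1 hz_neg.le
      rw [h6def] at this
      rw [rpow_inv_pow_base hmdef hm0 (by norm_num : (0:ℝ) < 6)] at this
      exact this
  · -- radial
    intro x y _ _ hxy
    simp only [gfun]
    rw [hxy]
  · -- PDE inequality
    intro x hlt hlt2
    have hx0 : 0 < ‖x‖ := lt_trans (by linarith) hlt
    have hs : (0:ℝ) < ‖x‖^2 := by positivity
    have hu0 : 0 < ufun a c m (‖x‖^2) :=
      lt_of_lt_of_le hs6 (hu_bounds x hlt.le hlt2.le).1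
    set Sop : Set (EuclideanSpace ℝ (Fin n)) := ball 0 (2*R) \ closedBall 0 R with hSdef
    have hSopen : IsOpen Sop := isOpen_ball.sdiff Metric.isClosed_closedBall
    have hSmem : ∀ y : EuclideanSpace ℝ (Fin n), (y ∈ Sop ↔ R < ‖y‖ ∧ ‖y‖ < 2*R) := by
      intro y
      rw [hSdef]
      simp only [Set.mem_diff, Metric.mem_ball, Metric.mem_closedBall, dist_zero_right, not_le]
      tauto
    have hxS : x ∈ Sop := (hSmem x).mpr ⟨hlt, hlt2⟩
    have hup : ∀ y ∈ Sop, 0 < ufun a c m (‖y‖^2) ∧ ((‖y‖:ℝ)^2 ≠ 0) := by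
      intro y hy
      obtain ⟨k1, k2⟩ := (hSmem y).mp hy
      have hy0 : 0 < ‖y‖ := lt_trans (by linarith) k1
      exact ⟨lt_of_lt_of_le hs6 (hu_bounds y k1.le k2.le).1, by positivity⟩
    have hfd : ∀ y ∈ Sop, HasFDerivAt (fun z : EuclideanSpace ℝ (Fin n) => gfun a c m (‖z‖^2))
        (gfun' a c m (‖y‖^2) • ((2:ℕ) • innerSL ℝ y)) y := by
      intro y hy
      exact (hasDerivAt_gfun (hup y hy).2 (ne_of_gt (hup y hy).1)).comp_hasFDerivAt y
        (hasStrictFDerivAt_norm_sq y).hasFDerivAt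
    -- gradient
    have htd : (InnerProductSpace.toDual ℝ (EuclideanSpace ℝ (Fin n)))
        ((2 * gfun' a c m (‖x‖^2)) • x) = gfun' a c m (‖x‖^2) • ((2:ℕ) • innerSL ℝ x) := by
      ext y
      simp only [InnerProductSpace.toDual_apply_apply, ContinuousLinearMap.smul_apply,
        innerSL_apply_apply, smul_eq_mul, nsmul_eq_mul, Nat.cast_ofNat, inner_smul_left, conj_trivial]
      ring
    have hg : HasGradientAt (fun z : EuclideanSpace ℝ (Fin n) => gfun a c m (‖z‖^2))
        ((2 * gfun' a c m (‖x‖^2)) • x) x := by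
      rw [hasGradientAt_iff_hasFDerivAt, htd]
      exact hfd x hxS
    have hgrad := hg.gradient
    have hgn : ‖gradient (fun z : EuclideanSpace ℝ (Fin n) => gfun a c m (‖z‖^2)) x‖^2
        = 4 * ‖x‖^2 * (gfun' a c m (‖x‖^2))^2 := by
      rw [hgrad, norm_smul, mul_pow, Real.norm_eq_abs, sq_abs]
      ring
    -- laplacian terms
    have hterm : ∀ i : Fin n,
        fderiv ℝ (fun y => fderiv ℝ (fun z : EuclideanSpace ℝ (Fin n) => gfun a c m (‖z‖^2)) y
          (EuclideanSpace.single i 1)) x (EuclideanSpace.single i 1)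
        = 2 * gfun' a c m (‖x‖^2) + 4 * gfun'' a c m (‖x‖^2) * (x i)^2 := by
      intro i
      have hfde : ∀ y ∈ Sop, fderiv ℝ (fun z : EuclideanSpace ℝ (Fin n) => gfun a c m (‖z‖^2)) y
          (EuclideanSpace.single i 1)
          = (2 * gfun' a c m (‖y‖^2)) * (innerSL ℝ (EuclideanSpace.single i (1:ℝ)) y) := by
        intro y hy
        rw [(hfd y hy).fderiv]
        simp only [ContinuousLinearMap.smul_apply, innerSL_apply_apply, smul_eq_mul,
          nsmul_eq_mul, Nat.cast_ofNat]
        rw [real_inner_comm]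
        ring
      have hev : (fun y => fderiv ℝ (fun z : EuclideanSpace ℝ (Fin n) => gfun a c m (‖z‖^2)) y
          (EuclideanSpace.single i 1)) =ᶠ[nhds x]
          (fun y => (2 * gfun' a c m (‖y‖^2)) * (innerSL ℝ (EuclideanSpace.single i (1:ℝ)) y)) :=
        Filter.eventually_of_mem (hSopen.mem_nhds hxS) (fun y hy => hfde y hy)
      rw [hev.fderiv_eq]
      have hf1 : HasFDerivAt (fun y : EuclideanSpace ℝ (Fin n) => 2 * gfun' a c m (‖y‖^2))
          ((2:ℝ) • (gfun'' a c m (‖x‖^2) • ((2:ℕ) • innerSL ℝ x))) x := by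
        exact ((hasDerivAt_gfun' hs.ne' hu0.ne').comp_hasFDerivAt x
          (hasStrictFDerivAt_norm_sq x).hasFDerivAt).const_mul 2
      have hf2 : HasFDerivAt (fun y : EuclideanSpace ℝ (Fin n) =>
          (innerSL ℝ (EuclideanSpace.single i (1:ℝ))) y)
          (innerSL ℝ (EuclideanSpace.single i (1:ℝ))) x :=
        (innerSL ℝ (EuclideanSpace.single i (1:ℝ))).hasFDerivAt
      have hmul := hf1.mul hf2
      erw [hmul.fderiv]
      simp only [ContinuousLinearMap.add_apply, ContinuousLinearMap.smul_apply,
        innerSL_apply_apply, smul_eq_mul, nsmul_eq_mul, Nat.cast_ofNat,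
        EuclideanSpace.inner_single_left, EuclideanSpace.inner_single_right,
        EuclideanSpace.single_apply, if_true, if_pos rfl, conj_trivial, one_mul, mul_one]
      ring
    have hsum : ∑ i : Fin n, (x i)^2 = ‖x‖^2 := by
      have h := real_inner_self_eq_norm_sq x
      rw [PiLp.inner_apply] at h
      simp only [RCLike.inner_apply, conj_trivial] at h
      rw [← h]
      exact Finset.sum_congr rfl (fun i _ => sq (x i) ▸ (pow_two (x i)))
    have hlap : lap (fun z : EuclideanSpace ℝ (Fin n) => gfun a c m (‖z‖^2)) x
        = gfun a c m (‖x‖^2) * 0 + (4 * ‖x‖^2 * gfun'' a c m (‖x‖^2)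
          + 2 * n * gfun' a c m (‖x‖^2)) := by
      unfold lap
      rw [Finset.sum_congr rfl (fun i _ => hterm i)]
      rw [Finset.sum_add_distrib, Finset.sum_const, Finset.card_univ, Fintype.card_fin,
        nsmul_eq_mul, ← Finset.mul_sum]
      have : ∑ i : Fin n, (x i)^2 = ‖x‖^2 := hsum
      rw [this]
      ring
    have hid := main_identity (a := a) (c := c) hs hm hmn hu0
    rw [hgn, hlap]
    rw [show gfun a c m (‖x‖^2) * 0 + (4 * ‖x‖^2 * gfun'' a c m (‖x‖^2)
        + 2 * n * gfun' a c m (‖x‖^2)) = 4 * ‖x‖^2 * gfun'' a c m (‖x‖^2)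
        + 2 * n * gfun' a c m (‖x‖^2) by ring]
    calc (n - 1 : ℝ) * (4 * ‖x‖^2 * (gfun' a c m (‖x‖^2))^2)
        = gfun a c m (‖x‖^2) * (4 * ‖x‖^2 * gfun'' a c m (‖x‖^2)
          + 2 * n * gfun' a c m (‖x‖^2)) := hid.symm
    _ ≤ gfun a c m (‖x‖^2) * (4 * ‖x‖^2 * gfun'' a c m (‖x‖^2)
          + 2 * n * gfun' a c m (‖x‖^2)) := le_refl _
  · -- boundary value 1
    intro x hx
    have hx0 : 0 < ‖x‖ := by rw [hx]; linarith
    show ufun a c m (‖x‖^2) ^ (-(1/m)) = 1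
    rw [hval _ hx0, hx]
    rw [show a - c * (((2*R) ^ mN)⁻¹ : ℝ) = a - c * Q by rw [hQdef], hv1, Real.one_rpow]
  · -- greater than 5
    intro x h1 h2
    have hx0 : 0 < ‖x‖ := hx0pos x h1
    have hub : ufun a c m (‖x‖^2) < s5 := by
      rw [hval _ hx0]
      calc a - c * ((‖x‖ ^ mN)⁻¹ : ℝ) ≤ a - c * (((R+1) ^ mN)⁻¹ : ℝ) := hmono ‖x‖ (R+1) hx0 h2
      _ = a - c * T := by rw [hTdef]
      _ < s5 := hvT
    have hu0 : 0 < ufun a c m (‖x‖^2) := by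
      rw [hval _ hx0]
      calc (0:ℝ) < s6 := hs6
      _ = a - c * P := hv6.symm
      _ = a - c * ((R ^ mN)⁻¹ : ℝ) := by rw [hPdef]
      _ ≤ a - c * ((‖x‖ ^ mN)⁻¹ : ℝ) := hmono R ‖x‖ hR0 h1
    have := Real.rpow_lt_rpow_of_neg hu0 hub hz_neg
    rw [h5def, rpow_inv_pow_base hmdef hm0 (by norm_num : (0:ℝ) < 5)] at this
    exact this
end

section
/- (Nonlinear time scaling for subsolutions via Lambert W.) Fix α, γ, λ > 0 with γ + λ - αγ > 0, set ξ = γ + λ - αγ, and define f(t) = t + ξ - αγ · W((ξ/(αγ)) e^{(t+ξ)/(αγ)}) for t ≥ 0, where W is the principal branch of the Lambert W function. Then: (a) f(0) = 0; (b) f'(t) = αγ/h(t) where h(t) = αγ(1 + W((ξ/(αγ)) e^{(t+ξ)/(αγ)})) = t - f(t) + γ + λ, f'' < 0, and f'(0) = αγ/(γ+λ); (c) h satisfies the differential relation h·h'/(h - αγ) = 1 with h(0) = γ + λ, hence (h/(h - αγ))h' ≥ 1; (d) f(t) ≤ t for all t ≥ 0 and 0 < f'(t) < 1 when α < 1 +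 λ/γ and αγ < h(t). -/
/-!
Put `a = αγ` and `g(t) = W(z(t))`. Taking logarithms in `g e^g = z` gives
`log g + g = t/a + const`, so `g > 0` is the inverse of the increasing map
`u ↦ a (log u + u - const)`. The inverse function theorem gives `g' = g / (a (1 + g))`, from which
`f' = a/h`, `h' = (h - a)/h` and `f'' < 0` follow by algebra, while `f(t) ≤ t` is the
monotonicity of `g` together with `a g(0) = ξ`, i.e. `W(x e^x) = x` at `x = ξ/a`.
-/

open Real

/-- `g s = W (exp (s / a + b))` for the principal Lambert branch `W`. -/
structure IsLambertCurve (a b : ℝ) (g : ℝ → ℝ) : Prop where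
  pos : ∀ s, 0 < g s
  log_add_self : ∀ s, log (g s) + g s = s / a + b

theorem isLambertCurve_comp_mul_exp {W : ℝ → ℝ} (hW : ∀ z, 0 < z → W z * exp (W z) = z)
    {c : ℝ} (hc : 0 < c) (a d : ℝ) :
    IsLambertCurve a (log c + d / a) (fun s => W (c * exp ((s + d) / a))) := by
  have hz : ∀ s, 0 < c * exp ((s + d) / a) := fun s => by positivity
  have hW_pos : ∀ s, 0 < W (c * exp ((s + d) / a)) := fun s =>
    pos_of_mul_pos_left ((hW _ (hz s)).symm ▸ hz s) (exp_pos _).le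
  refine ⟨hW_pos, fun s => ?_⟩
  have := congrArg log (hW _ (hz s))
  rw [log_mul (hW_pos s).ne' (exp_ne_zero _), log_exp, log_mul hc.ne' (exp_ne_zero _),
    log_exp] at this
  rw [this, add_div]
  ring

namespace IsLambertCurve

variable {a b : ℝ} {g : ℝ → ℝ}

theorem mul_log_add_self_sub (hg : IsLambertCurve a b g) (ha : a ≠ 0) (s : ℝ) :
    a * (log (g s) + g s - b) = s := by
  rw [hg.log_add_self, add_sub_cancel_right, mul_div_cancel₀ _ ha]

theorem mul_sub_le_sub (hg : IsLambertCurve a b g) (ha : 0 < a) {s s' : ℝ}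
    (hgs : g s ≤ g s') : a * (g s' - g s) ≤ s' - s := by
  have hlog := log_le_log (hg.pos s) hgs
  have h := hg.mul_log_add_self_sub ha.ne'
  linarith [h s, h s', mul_le_mul_of_nonneg_left (sub_nonneg.2 hlog) ha.le]

theorem strictMono (hg : IsLambertCurve a b g) (ha : 0 < a) : StrictMono g := by
  refine fun s s' hss' => lt_of_not_ge fun hgs => ?_
  linarith [hg.mul_sub_le_sub ha hgs, mul_nonneg ha.le (sub_nonneg.2 hgs)]

theorem lipschitzWith (hg : IsLambertCurve a b g) (ha : 0 < a) :
    LipschitzWith (Real.toNNReal a⁻¹) g := by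
  refine LipschitzWith.of_le_add_mul' a⁻¹ fun s s' => ?_
  rcases le_total (g s) (g s') with hgs | hgs
  · exact le_add_of_le_of_nonneg hgs (by positivity)
  · have := hg.mul_sub_le_sub ha hgs
    have hdist : s - s' ≤ dist s s' := (le_abs_self _).trans_eq (Real.dist_eq s s').symm
    calc g s = g s' + a⁻¹ * (a * (g s - g s')) := by field_simp; ring
      _ ≤ g s' + a⁻¹ * dist s s' := by gcongr; exact this.trans hdist

theorem hasDerivAt (hg : IsLambertCurve a b g) (ha : 0 < a) (t : ℝ) :
    HasDerivAt g (g t / (a * (1 + g t))) t := by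
  have ht := hg.pos t
  have hinv : HasDerivAt (fun u => a * (log u + u - b)) (a * ((g t)⁻¹ + 1)) (g t) :=
    (((hasDerivAt_log ht.ne').add (hasDerivAt_id _)).sub_const b).const_mul a
  have hg' := hinv.of_local_left_inverse (hg.lipschitzWith ha).continuous.continuousAt
    (by positivity) (.of_forall (hg.mul_log_add_self_sub ha.ne'))
  rwa [show (a * ((g t)⁻¹ + 1))⁻¹ = g t / (a * (1 + g t)) by field_simp] at hg'

theorem hasDerivAt_add_sub_mul (hg : IsLambertCurve a b g) (ha : 0 < a) (c t : ℝ) :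
    HasDerivAt (fun s => s + c - a * g s) (a / (a * (1 + g t))) t := by
  have ht := hg.pos t
  exact (((hasDerivAt_id t).add_const c).sub ((hg.hasDerivAt ha t).const_mul a)).congr_deriv
    (by field_simp; ring)

theorem deriv_add_sub_mul (hg : IsLambertCurve a b g) (ha : 0 < a) (c : ℝ) :
    deriv (fun s => s + c - a * g s) = fun t => a / (a * (1 + g t)) :=
  funext fun t => (hg.hasDerivAt_add_sub_mul ha c t).deriv

theorem hasDerivAt_mul_one_add (hg : IsLambertCurve a b g) (ha : 0 < a) (t : ℝ) :
    HasDerivAt (fun s => a * (1 + g s)) (g t / (1 + g t)) t := by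
  have ht := hg.pos t
  exact (((hg.hasDerivAt ha t).const_add 1).const_mul a).congr_deriv (by field_simp)

theorem deriv_deriv_add_sub_mul_neg (hg : IsLambertCurve a b g) (ha : 0 < a) (c t : ℝ) :
    deriv (deriv (fun s => s + c - a * g s)) t < 0 := by
  have ht := hg.pos t
  have hh : 0 < a * (1 + g t) := by positivity
  have hd : HasDerivAt (fun s => a / (a * (1 + g s)))
      ((0 * (a * (1 + g t)) - a * (g t / (1 + g t))) / (a * (1 + g t)) ^ 2) t :=
    (hasDerivAt_const t a).div (hg.hasDerivAt_mul_one_add ha t) hh.ne'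
  rw [hg.deriv_add_sub_mul ha c, hd.deriv]
  have : 0 < a * (g t / (1 + g t)) := by positivity
  have : 0 < (a * (1 + g t)) ^ 2 := by positivity
  apply div_neg_of_neg_of_pos <;> linarith

theorem div_sub_mul_deriv_mul_one_add_eq_one (hg : IsLambertCurve a b g) (ha : 0 < a) (t : ℝ) :
    a * (1 + g t) / (a * (1 + g t) - a) * deriv (fun s => a * (1 + g s)) t = 1 := by
  have ht := hg.pos t
  rw [(hg.hasDerivAt_mul_one_add ha t).deriv, show a * (1 + g t) - a = a * g t by ring]
  field_simp

end IsLambertCurve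

theorem stmt15_general (α γ lam : ℝ) (hα : 0 < α) (hγ : 0 < γ)
    (hξ : 0 < γ + lam - α * γ)
    (W : ℝ → ℝ)
    (hW1 : ∀ x : ℝ, -1 ≤ x → W (x * Real.exp x) = x)
    (hW2 : ∀ z : ℝ, -Real.exp (-1) ≤ z → W z * Real.exp (W z) = z ∧ -1 ≤ W z)
    (f h : ℝ → ℝ)
    (hf : ∀ t, f t = t + (γ + lam - α * γ) -
      α * γ * W ((γ + lam - α * γ) / (α * γ) *
        Real.exp ((t + (γ + lam - α * γ)) / (α * γ))))
    (hh : ∀ t, h t = α * γ * (1 + W ((γ + lam - α * γ) / (α * γ) *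
        Real.exp ((t + (γ + lam - α * γ)) / (α * γ))))) :
    f 0 = 0 ∧
    (∀ t, 0 ≤ t → h t = t - f t + γ + lam) ∧
    (∀ t, 0 ≤ t → deriv f t = α * γ / h t) ∧
    (∀ t, 0 ≤ t → deriv (deriv f) t < 0) ∧
    deriv f 0 = α * γ / (γ + lam) ∧
    h 0 = γ + lam ∧
    (∀ t, 0 ≤ t → (h t / (h t - α * γ)) * deriv h t = 1) ∧
    (∀ t, 0 ≤ t → 1 ≤ (h t / (h t - α * γ)) * deriv h t) ∧
    (∀ t, 0 ≤ t → f t ≤ t) ∧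
    (∀ t, 0 ≤ t → α < 1 + lam / γ → α * γ < h t →
      0 < deriv f t ∧ deriv f t < 1) := by
  have ha : 0 < α * γ := mul_pos hα hγ
  have hc : 0 < (γ + lam - α * γ) / (α * γ) := div_pos hξ ha
  set g := fun s => W ((γ + lam - α * γ) / (α * γ) *
    Real.exp ((s + (γ + lam - α * γ)) / (α * γ)))
  have hg : IsLambertCurve (α * γ) _ g := isLambertCurve_comp_mul_exp
    (fun z hz => (hW2 z (by linarith [exp_pos (-1)])).1) hc (α * γ) (γ + lam - α * γ)
  have hg0 : α * γ * g 0 = γ + lam - α * γ := by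
    show α * γ * W (_ * exp ((0 + _) / _)) = _
    rw [zero_add, hW1 _ (by linarith)]
    field_simp
  obtain rfl : f = fun s => s + (γ + lam - α * γ) - α * γ * g s := funext hf
  obtain rfl : h = fun s => α * γ * (1 + g s) := funext hh
  have hh0 : α * γ * (1 + g 0) = γ + lam := by linear_combination hg0
  refine ⟨show 0 + _ - _ = _ by linarith, fun t _ => by ring,
    fun t _ => by rw [hg.deriv_add_sub_mul ha], fun t _ => hg.deriv_deriv_add_sub_mul_neg ha _ t,
    by rw [hg.deriv_add_sub_mul ha]; exact congrArg _ hh0, hh0,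
    fun t _ => hg.div_sub_mul_deriv_mul_one_add_eq_one ha t,
    fun t _ => (hg.div_sub_mul_deriv_mul_one_add_eq_one ha t).ge, fun t ht => ?_,
    fun t _ _ hlt => ?_⟩
  · have := mul_le_mul_of_nonneg_left ((hg.strictMono ha).monotone ht) ha.le
    show _ - _ ≤ _
    linarith
  · rw [hg.deriv_add_sub_mul ha]
    exact ⟨div_pos ha (by linarith), (div_lt_one (by linarith)).2 hlt⟩

/-- Nonlinear time scaling for subsolutions via Lambert W: with
`ξ = γ + λ - αγ > 0`, `f(t) = t + ξ - αγ W((ξ/(αγ))e^{(t+ξ)/(αγ)})` and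
`h(t) = αγ(1 + W((ξ/(αγ))e^{(t+ξ)/(αγ)}))`, where `W` is the principal branch of
the Lambert W function, we have: (a) `f(0) = 0`; (b) `h(t) = t - f(t) + γ + λ`,
`f'(t) = αγ/h(t)`, `f'' < 0`, `f'(0) = αγ/(γ+λ)`, `h(0) = γ+λ`;
(c) `(h/(h-αγ))h' = 1`, hence `≥ 1`; (d) `f(t) ≤ t`, and `0 < f' < 1` when
`α < 1 + λ/γ` and `αγ < h(t)`. -/
theorem stmt15 (α γ lam : ℝ) (hα : 0 < α) (hγ : 0 < γ) (hlam : 0 < lam)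
    (hξ : 0 < γ + lam - α * γ)
    (W : ℝ → ℝ)
    (hW1 : ∀ x : ℝ, -1 ≤ x → W (x * Real.exp x) = x)
    (hW2 : ∀ z : ℝ, -Real.exp (-1) ≤ z → W z * Real.exp (W z) = z ∧ -1 ≤ W z)
    (f h : ℝ → ℝ)
    (hf : ∀ t, f t = t + (γ + lam - α * γ) -
      α * γ * W ((γ + lam - α * γ) / (α * γ) *
        Real.exp ((t + (γ + lam - α * γ)) / (α * γ))))
    (hh : ∀ t, h t = α * γ * (1 + W ((γ + lam - α * γ) / (α * γ) *
        Real.exp ((t + (γ + lam - α * γ)) / (α * γ))))) :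
    f 0 = 0 ∧
    (∀ t, 0 ≤ t → h t = t - f t + γ + lam) ∧
    (∀ t, 0 ≤ t → deriv f t = α * γ / h t) ∧
    (∀ t, 0 ≤ t → deriv (deriv f) t < 0) ∧
    deriv f 0 = α * γ / (γ + lam) ∧
    h 0 = γ + lam ∧
    (∀ t, 0 ≤ t → (h t / (h t - α * γ)) * deriv h t = 1) ∧
    (∀ t, 0 ≤ t → 1 ≤ (h t / (h t - α * γ)) * deriv h t) ∧
    (∀ t, 0 ≤ t → f t ≤ t) ∧
    (∀ t, 0 ≤ t → α < 1 + lam / γ → α * γ < h t →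
      0 < deriv f t ∧ deriv f t < 1) :=
  stmt15_general α γ lam hα hγ hξ W hW1 hW2 f h hf hh
end

section
/- (Convergence of the nonlinear time scaling.) With f(t; α, γ, λ) = t + ξ - αγ W((ξ/(αγ))e^{(t+ξ)/(αγ)}), ξ = γ + λ - αγ > 0, γ > 0 fixed: f(t; α, γ, λ) → t locally uniformly on [0, ∞) as (α, λ) → (1, 0). Equivalently, h(t) = t - f(t) + γ + λ → γ locally uniformly, because (ξ/(αγ))e^{(t+ξ)/(αγ)} → 0 locally uniformly in t as (α,λ) → (1,0), W(0) = 0, and W is continuous at 0. -/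
open Real Set Filter Topology

/-!
Write `ξ = γ + λ - αγ` and `x = (ξ/(αγ)) e^{(t+ξ)/(αγ)}`, so that `f - t = ξ - αγ W(x)`.
This error is a function of `(α, λ, x)` that is continuous at `(1, 0, 0)`, where it vanishes
because `W 0 = 0`. On `[0, T]` the argument `x` is dominated by its value at `t = T`, which
tends to `0` as `(α, λ) → (1, 0)`; hence `x → 0` uniformly in `t`.
-/

lemma tendsto_sub_mul_comp_nhds_zero {γ : ℝ} {W : ℝ → ℝ} (hW0 : W 0 = 0)
    (hWc : ContinuousAt W 0) :
    Tendsto (fun q : ℝ × ℝ × ℝ => (γ + q.2.1 - q.1 * γ) - q.1 * γ * W q.2.2)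
      (𝓝 (1, 0, 0)) (𝓝 0) := by
  have hW : ContinuousAt (fun q : ℝ × ℝ × ℝ => W q.2.2) (1, 0, 0) :=
    ContinuousAt.comp (f := fun q : ℝ × ℝ × ℝ => q.2.2) hWc (by fun_prop)
  have h : ContinuousAt (fun q : ℝ × ℝ × ℝ => (γ + q.2.1 - q.1 * γ) - q.1 * γ * W q.2.2)
      (1, 0, 0) := by
    fun_prop
  simpa [hW0] using h.tendsto

lemma tendsto_div_mul_exp_nhds_zero {γ : ℝ} (hγ : 0 < γ) (T : ℝ) :
    Tendsto (fun p : ℝ × ℝ =>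
        (γ + p.2 - p.1 * γ) / (p.1 * γ) * exp ((T + (γ + p.2 - p.1 * γ)) / (p.1 * γ)))
      (𝓝 (1, 0)) (𝓝 0) := by
  have h : ContinuousAt (fun p : ℝ × ℝ =>
      (γ + p.2 - p.1 * γ) / (p.1 * γ) * exp ((T + (γ + p.2 - p.1 * γ)) / (p.1 * γ))) (1, 0) := by
    fun_prop (disch := simp [hγ.ne'])
  simpa using h.tendsto

lemma abs_div_mul_exp_le {a ξ t T : ℝ} (ha : 0 < a) (hξ : 0 ≤ ξ) (ht : t ≤ T) :
    |ξ / a * exp ((t + ξ) / a)| ≤ ξ / a * exp ((T + ξ) / a) := by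
  have hξa : 0 ≤ ξ / a := div_nonneg hξ ha.le
  rw [abs_of_nonneg (by positivity)]
  gcongr

theorem stmt16_general (γ : ℝ) (hγ : 0 < γ)
    (W : ℝ → ℝ) (hW0 : W 0 = 0) (hWc : ContinuousAt W 0) :
    ∀ T > (0 : ℝ), ∀ ε > (0 : ℝ), ∃ δ > (0 : ℝ),
      ∀ α lam : ℝ, 0 < α → α ≤ 1 → 0 ≤ lam →
        |α - 1| < δ → |lam| < δ → 0 < γ + lam - α * γ →
        ∀ t ∈ Set.Icc (0 : ℝ) T,
          |(t + (γ + lam - α * γ) -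
            α * γ * W ((γ + lam - α * γ) / (α * γ) *
              Real.exp ((t + (γ + lam - α * γ)) / (α * γ)))) - t| < ε := by
  intro T _ ε hε
  obtain ⟨η, hη, hError⟩ :=
    Metric.tendsto_nhds_nhds.mp (tendsto_sub_mul_comp_nhds_zero (γ := γ) hW0 hWc) ε hε
  obtain ⟨δ, hδ, hArg⟩ := Metric.tendsto_nhds_nhds.mp (tendsto_div_mul_exp_nhds_zero hγ T) η hη
  refine ⟨min η δ, lt_min hη hδ, fun α lam hα _ _ hα1 hlam hξ t ht => ?_⟩
  set x := (γ + lam - α * γ) / (α * γ) * exp ((t + (γ + lam - α * γ)) / (α * γ))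
  have hArgSmall := @hArg (α, lam) (by
    simp only [Prod.dist_eq, Real.dist_eq, sub_zero, max_lt_iff]
    exact ⟨hα1.trans_le (min_le_right _ _), hlam.trans_le (min_le_right _ _)⟩)
  simp only [Real.dist_eq, sub_zero] at hArgSmall
  have hx : |x| < η :=
    (abs_div_mul_exp_le (by positivity) hξ.le ht.2).trans_lt ((le_abs_self _).trans_lt hArgSmall)
  have hErrorSmall := @hError (α, lam, x) (by
    simp only [Prod.dist_eq, Real.dist_eq, sub_zero, max_lt_iff]
    exact ⟨hα1.trans_le (min_le_left _ _), hlam.trans_le (min_le_left _ _), hx⟩)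
  simp only [Real.dist_eq, sub_zero] at hErrorSmall
  rwa [add_sub_assoc, add_sub_cancel_left]

/-- Convergence of the nonlinear time scaling: with
`f(t; α, γ, λ) = t + ξ - αγ W((ξ/(αγ))e^{(t+ξ)/(αγ)})`, `ξ = γ + λ - αγ > 0`,
and `γ > 0` fixed, `f(t; α, γ, λ) → t` locally uniformly on `[0, ∞)` (i.e.
uniformly on `[0, T]` for every `T > 0`) as `(α, λ) → (1, 0)` within the
parameter region `0 < α ≤ 1`, `λ ≥ 0`, `γ + λ - αγ > 0`. -/
theorem stmt16 (γ : ℝ) (hγ : 0 < γ)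
    (W : ℝ → ℝ) (hW0 : W 0 = 0) (hWc : ContinuousAt W 0)
    (hW1 : ∀ x : ℝ, -1 ≤ x → W (x * Real.exp x) = x) :
    ∀ T > (0 : ℝ), ∀ ε > (0 : ℝ), ∃ δ > (0 : ℝ),
      ∀ α lam : ℝ, 0 < α → α ≤ 1 → 0 ≤ lam →
        |α - 1| < δ → |lam| < δ → 0 < γ + lam - α * γ →
        ∀ t ∈ Set.Icc (0 : ℝ) T,
          |(t + (γ + lam - α * γ) -
            α * γ * W ((γ + lam - α * γ) / (α * γ) *
              Real.exp ((t + (γ + lam - α * γ)) / (α * γ)))) - t| < ε :=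
  stmt16_general γ hγ W hW0 hWc
end
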